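/- An informationally complete POVM cannot perfectly distinguish any pair of distinct states: if A is informationally complete then there is no pair of states ρ₀ ≠ ρ₁ and subset O of outcomes with Σ_{x∈O} tr(ρ₀A(x)) = 1 and Σ_{x∉O} tr(ρ₁A(x)) = 1. -/

import Mathlib

open Matrix
open scoped ComplexOrder

abbrev Mat (d : ℕ) := Matrix (Fin d) (Fin d) ℂ

/-- A quantum state (density operator). -/
def IsState {d : ℕ} (ρ : Mat d) : Prop := ρ.PosSemidef ∧ ρ.trace = 1

/-- A POVM (observable with finite outcome set). -/
def IsPOVM {d : ℕ} {ι : Type} [Fintype ι] (A : ι → Mat d) : Prop :=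
  (∀ x, (A x).PosSemidef) ∧ ∑ x, A x = 1

/-- The pair of states `ρ₁, ρ₂` is distinguishable by the observable `A`. -/
def Distinguishes {d : ℕ} {ι : Type} [Fintype ι] (A : ι → Mat d) (ρ₁ ρ₂ : Mat d) : Prop :=
  ∃ x, (ρ₁ * A x).trace ≠ (ρ₂ * A x).trace

/-- Informational completeness of an observable. -/
def InfoComplete {d : ℕ} {ι : Type} [Fintype ι] (A : ι → Mat d) : Prop :=
  ∀ ρ₁ ρ₂ : Mat d, IsState ρ₁ → IsState ρ₂ →
    (∀ x, (ρ₁ * A x).trace = (ρ₂ * A x).trace) → ρ₁ = ρ₂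
/-- `A` perfectly distinguishes the pair of states `ρ₀, ρ₁`. -/
def PerfectlyDistinguishes {d : ℕ} {ι : Type} [Fintype ι] [DecidableEq ι]
    (A : ι → Mat d) (ρ₀ ρ₁ : Mat d) : Prop :=
  ∃ O : Finset ι, ∑ x ∈ O, (ρ₀ * A x).trace = 1 ∧ ∑ x ∈ Oᶜ, (ρ₁ * A x).trace = 1

/-!
If `A` perfectly distinguishes `ρ₀` and `ρ₁`, then every effect `A x` annihilates `ρ₀` or `ρ₁`:
the probabilities outside the distinguishing event vanish, and for positive semidefinite `P, Q`,
`tr (P Q) = 0` forces `P Q = 0`. Take nonzero vectors `u` in the range of `ρ₀` and `v` in the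
range of `ρ₁`. No effect detects both, so `⟪u, A x v⟫ = 0` for every outcome; summing over `x`
makes `u ⟂ v`. Hence the pure states along `u + v` and `u - v` have the same outcome statistics,
yet they differ, contradicting informational completeness.
-/

namespace Matrix

variable {𝕜 n : Type*} [RCLike 𝕜] [Fintype n]

namespace PosSemidef

variable {A B : Matrix n n 𝕜}

open scoped MatrixOrder in
theorem trace_mul_nonneg (hA : A.PosSemidef) (hB : B.PosSemidef) : 0 ≤ (A * B).trace := by
  classical
  obtain ⟨C, rfl⟩ := CStarAlgebra.nonneg_iff_eq_star_mul_self.mp hB.nonneg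
  rw [star_eq_conjTranspose, ← mul_assoc, trace_mul_comm, ← mul_assoc]
  exact (hA.mul_mul_conjTranspose_same C).trace_nonneg

open scoped MatrixOrder in
theorem mul_eq_zero_of_trace_mul_eq_zero (hA : A.PosSemidef) (hB : B.PosSemidef)
    (h : (A * B).trace = 0) : A * B = 0 := by
  classical
  obtain ⟨D, rfl⟩ := CStarAlgebra.nonneg_iff_eq_star_mul_self.mp hA.nonneg
  obtain ⟨C, rfl⟩ := CStarAlgebra.nonneg_iff_eq_star_mul_self.mp hB.nonneg
  simp only [star_eq_conjTranspose] at h ⊢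
  have hDC : D * Cᴴ = 0 := by
    rw [← trace_conjTranspose_mul_self_eq_zero_iff, conjTranspose_mul, conjTranspose_conjTranspose,
      ← h, mul_assoc, trace_mul_comm, ← mul_assoc, ← mul_assoc]
  rw [mul_assoc, ← mul_assoc D, hDC, zero_mul, mul_zero]

end PosSemidef

theorem IsHermitian.star_dotProduct_mulVec_eq_zero {M : Matrix n n 𝕜} (hM : M.IsHermitian)
    {u : n → 𝕜} (hu : M *ᵥ u = 0) (v : n → 𝕜) : star u ⬝ᵥ M *ᵥ v = 0 := by
  rw [dotProduct_mulVec, ← hM.eq, ← star_mulVec, hu, star_zero, zero_dotProduct]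

theorem IsHermitian.star_add_dotProduct_mulVec_add {M : Matrix n n 𝕜} (hM : M.IsHermitian)
    {u v : n → 𝕜} (h : M *ᵥ u = 0 ∨ M *ᵥ v = 0) :
    star (u + v) ⬝ᵥ M *ᵥ (u + v) = star (u - v) ⬝ᵥ M *ᵥ (u - v) := by
  obtain ⟨huv, hvu⟩ : star u ⬝ᵥ M *ᵥ v = 0 ∧ star v ⬝ᵥ M *ᵥ u = 0 := by
    rcases h with hu | hv
    · exact ⟨hM.star_dotProduct_mulVec_eq_zero hu v, by rw [hu, dotProduct_zero]⟩
    · exact ⟨by rw [hv, dotProduct_zero], hM.star_dotProduct_mulVec_eq_zero hv u⟩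
  simp only [star_add, star_sub, mulVec_add, mulVec_sub, add_dotProduct, dotProduct_add,
    sub_dotProduct, dotProduct_sub, huv, hvu]
  ring

theorem star_add_dotProduct_add_eq_star_sub_dotProduct_sub {u v : n → 𝕜}
    (h : star v ⬝ᵥ u = 0) : star (u + v) ⬝ᵥ (u + v) = star (u - v) ⬝ᵥ (u - v) := by
  have h' : star u ⬝ᵥ v = 0 := by rw [star_dotProduct, h, star_zero]
  simp only [star_add, star_sub, add_dotProduct, dotProduct_add, sub_dotProduct, dotProduct_sub,
    h, h']
  ring

theorem add_ne_zero_of_star_dotProduct_eq_zero {u v : n → 𝕜} (hu : u ≠ 0)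
    (h : star v ⬝ᵥ u = 0) : u + v ≠ 0 := by
  intro huv
  rw [eq_neg_of_add_eq_zero_right huv, star_neg, neg_dotProduct, neg_eq_zero,
    dotProduct_star_self_eq_zero] at h
  exact hu h

theorem sub_ne_zero_of_star_dotProduct_eq_zero {u v : n → 𝕜} (hu : u ≠ 0)
    (h : star v ⬝ᵥ u = 0) : u - v ≠ 0 := by
  rw [sub_eq_add_neg]
  exact add_ne_zero_of_star_dotProduct_eq_zero hu (by rw [star_neg, neg_dotProduct, h, neg_zero])

end Matrix

open Matrix

section PureState

variable {d : ℕ}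

noncomputable def pureState (w : Fin d → ℂ) : Mat d :=
  (star w ⬝ᵥ w)⁻¹ • vecMulVec w (star w)

theorem isState_pureState {w : Fin d → ℂ} (hw : w ≠ 0) : IsState (pureState w) := by
  refine ⟨(posSemidef_vecMulVec_self_star w).smul
    (inv_nonneg_of_nonneg (dotProduct_star_self_nonneg w)), ?_⟩
  rw [pureState, trace_smul, trace_vecMulVec, dotProduct_comm w, smul_eq_mul,
    inv_mul_cancel₀ (dotProduct_star_self_eq_zero.not.mpr hw)]

theorem trace_pureState_mul (w : Fin d → ℂ) (M : Mat d) :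
    (pureState w * M).trace = (star w ⬝ᵥ w)⁻¹ * (star w ⬝ᵥ M *ᵥ w) := by
  rw [pureState, smul_mul_assoc, trace_smul, vecMulVec_mul, trace_vecMulVec, dotProduct_comm w,
    dotProduct_mulVec, smul_eq_mul]

theorem pureState_mulVec (w x : Fin d → ℂ) :
    pureState w *ᵥ x = ((star w ⬝ᵥ w)⁻¹ * (star w ⬝ᵥ x)) • w := by
  rw [pureState, smul_mulVec, vecMulVec_mulVec, op_smul_eq_smul, smul_smul]

theorem pureState_add_ne_pureState_sub {u v : Fin d → ℂ} (hu : u ≠ 0) (hv : v ≠ 0)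
    (h : star v ⬝ᵥ u = 0) : pureState (u + v) ≠ pureState (u - v) := by
  intro heq
  have hplus : star (u + v) ⬝ᵥ u = star u ⬝ᵥ u := by rw [star_add, add_dotProduct, h, add_zero]
  have hminus : star (u - v) ⬝ᵥ u = star u ⬝ᵥ u := by rw [star_sub, sub_dotProduct, h, sub_zero]
  have hu_image := congrArg (· *ᵥ u) heq
  simp only [pureState_mulVec, hplus, hminus,
    star_add_dotProduct_add_eq_star_sub_dotProduct_sub h] at hu_image
  have hscalar : (star (u - v) ⬝ᵥ (u - v))⁻¹ * star u ⬝ᵥ u ≠ 0 :=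
    mul_ne_zero (inv_ne_zero (dotProduct_star_self_eq_zero.not.mpr
      (sub_ne_zero_of_star_dotProduct_eq_zero hu h))) (dotProduct_star_self_eq_zero.not.mpr hu)
  have hsum_eq := smul_right_injective (Fin d → ℂ) hscalar hu_image
  exact hv (self_eq_neg.mp (add_left_cancel (hsum_eq.trans (sub_eq_add_neg u v))))

end PureState

section POVM

variable {d : ℕ} {ι : Type} [Fintype ι] {A : ι → Mat d}

theorem IsState.exists_mulVec_ne_zero {ρ : Mat d} (hρ : IsState ρ) : ∃ w, ρ *ᵥ w ≠ 0 := by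
  by_contra! h
  have : ρ = 0 := mulVec_injective (funext fun w => by rw [h, zero_mulVec])
  simpa [this] using hρ.2

theorem IsPOVM.mul_eq_zero_of_sum_trace_mul_eq_one (hA : IsPOVM A) {ρ : Mat d}
    (hρ : IsState ρ) {S : Finset ι} (hS : ∑ x ∈ S, (ρ * A x).trace = 1) {x : ι} (hx : x ∉ S) :
    A x * ρ = 0 := by
  classical
  have htotal : ∑ x, (ρ * A x).trace = 1 := by
    rw [← trace_sum, ← Finset.mul_sum, hA.2, mul_one, hρ.2]
  have hrest : ∑ x ∈ Sᶜ, (ρ * A x).trace = 0 := by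
    rwa [← Finset.sum_add_sum_compl S, hS, add_eq_left] at htotal
  have hterm := (Finset.sum_eq_zero_iff_of_nonneg fun y _ =>
    hρ.1.trace_mul_nonneg (hA.1 y)).mp hrest x (Finset.mem_compl.mpr hx)
  exact (hA.1 x).mul_eq_zero_of_trace_mul_eq_zero hρ.1 (by rwa [trace_mul_comm])

theorem IsPOVM.star_dotProduct_eq_zero (hA : IsPOVM A) {u v : Fin d → ℂ}
    (h : ∀ x, A x *ᵥ u = 0 ∨ A x *ᵥ v = 0) : star u ⬝ᵥ v = 0 := by
  rw [← one_mulVec v, ← hA.2, sum_mulVec, dotProduct_sum]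
  refine Finset.sum_eq_zero fun x _ => ?_
  rcases h x with hu | hv
  · exact (hA.1 x).isHermitian.star_dotProduct_mulVec_eq_zero hu v
  · rw [hv, dotProduct_zero]

theorem IsPOVM.not_infoComplete_of_forall_mulVec_eq_zero_or (hA : IsPOVM A) {u v : Fin d → ℂ}
    (hu : u ≠ 0) (hv : v ≠ 0) (h : ∀ x, A x *ᵥ u = 0 ∨ A x *ᵥ v = 0) : ¬ InfoComplete A := by
  intro hIC
  have hvu : star v ⬝ᵥ u = 0 := hA.star_dotProduct_eq_zero fun x => (h x).symm
  refine pureState_add_ne_pureState_sub hu hv hvu <| hIC _ _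
    (isState_pureState (add_ne_zero_of_star_dotProduct_eq_zero hu hvu))
    (isState_pureState (sub_ne_zero_of_star_dotProduct_eq_zero hu hvu)) fun x => ?_
  rw [trace_pureState_mul, trace_pureState_mul,
    star_add_dotProduct_add_eq_star_sub_dotProduct_sub hvu,
    (hA.1 x).isHermitian.star_add_dotProduct_mulVec_add (h x)]

end POVM

theorem stmt5_general {d : ℕ} {ι : Type} [Fintype ι] [DecidableEq ι]
    (A : ι → Mat d) (hA : IsPOVM A) (hIC : InfoComplete A) :
    ¬ ∃ ρ₀ ρ₁ : Mat d, IsState ρ₀ ∧ IsState ρ₁ ∧ ρ₀ ≠ ρ₁ ∧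
        PerfectlyDistinguishes A ρ₀ ρ₁ := by
  rintro ⟨ρ₀, ρ₁, h₀, h₁, -, O, hO₀, hO₁⟩
  obtain ⟨w₀, hw₀⟩ := h₀.exists_mulVec_ne_zero
  obtain ⟨w₁, hw₁⟩ := h₁.exists_mulVec_ne_zero
  refine hA.not_infoComplete_of_forall_mulVec_eq_zero_or hw₀ hw₁ (fun x => ?_) hIC
  simp only [mulVec_mulVec]
  by_cases hx : x ∈ O
  · right
    rw [hA.mul_eq_zero_of_sum_trace_mul_eq_one h₁ hO₁ (Finset.notMem_compl.mpr hx), zero_mulVec]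
  · left
    rw [hA.mul_eq_zero_of_sum_trace_mul_eq_one h₀ hO₀ hx, zero_mulVec]

theorem stmt5 {d : ℕ} (hd : 0 < d) {ι : Type} [Fintype ι] [DecidableEq ι]
    (A : ι → Mat d) (hA : IsPOVM A) (hIC : InfoComplete A) :
    ¬ ∃ ρ₀ ρ₁ : Mat d, IsState ρ₀ ∧ IsState ρ₁ ∧ ρ₀ ≠ ρ₁ ∧
        PerfectlyDistinguishes A ρ₀ ρ₁ :=
  stmt5_general A hA hIC
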